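/- arXiv:1107.5357 — 4 statements merged into one kernel-verified Lean document; each statement's English description precedes it below -/
import Mathlib

section
/- Let (M,g) be an oriented Riemannian 4-manifold of constant sectional curvature k, i.e. R_{ijkl} = k(δ_{il}δ_{jk} − δ_{ik}δ_{jl}). Then on the gwistor space SM one has 𝓡α = −k·μ∧α₁, and consequently dφ = 3k·vol − (dμ)² − (k+2)·μ∧α₁. -/
noncomputable section

/-!
Abstract frame-based model of the gwistor space (G₂-twistor space) of an
oriented Riemannian 4-manifold `(M,g)` (Albuquerque–Salavessa).

`Ω` models the algebra of differential forms on the unit tangent sphere bundle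
`SM = {u ∈ TM : ‖u‖ = 1}` equipped with the Sasaki metric, multiplication of
`Ω` being the wedge product.  `W` models the sections of `TTM` restricted to
`SM`, so that both `T SM = H ⊕ V` (horizontal/vertical splitting) and the
pull-back bundle `π*TM` sit inside `W`.  `e 0, …, e 6` is the coframe dual to
an adapted frame `e₀ = θᵗU, e₁, e₂, e₃, e₄ = θe₁, e₅ = θe₂, e₆ = θe₃`.
-/

structure GwistorSpace (Ω W : Type) [Ring Ω] [Algebra ℝ Ω]
    [AddCommGroup W] [Module ℝ W] where
  /-- the adapted orthonormal coframe `e⁰,…,e⁶` of `SM` -/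
  e : Fin 7 → Ω
  /-- exterior derivative -/
  d : Ω →ₗ[ℝ] Ω
  /-- Hodge star operator of the Sasaki metric -/
  star : Ω →ₗ[ℝ] Ω
  /-- pointwise inner product of forms -/
  ip : Ω → Ω → ℝ
  /-- the Riemannian volume form of `SM` -/
  VolSM : Ω
  /-- the Sasaki metric of `SM` (extended to `TTM|_{SM}`) -/
  g : W → W → ℝ
  /-- the canonical endomorphism `θ` (identifying `H` with the vertical bundle) -/
  theta : W →ₗ[ℝ] W
  /-- the adjoint `θᵗ` of `θ` -/
  thetat : W →ₗ[ℝ] W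
  /-- horizontal projection of `T SM = H ⊕ V` -/
  hor : W →ₗ[ℝ] W
  /-- vertical projection of `T SM = H ⊕ V` -/
  ver : W →ₗ[ℝ] W
  /-- the canonical (outward) vertical unit vector field `U`, `U_u = u` -/
  U : W
  /-- the curvature components `R_{ijkl}` of `M` in the adapted frame -/
  R4 : Fin 4 → Fin 4 → Fin 4 → Fin 4 → ℝ
  /-- interior product `X ⌟ ·` -/
  iota : W → Ω →ₗ[ℝ] Ω
  /-- metric dual `X ↦ X♭` -/
  flat : W →ₗ[ℝ] Ω
  /-- Levi-Civita covariant derivative (of the Sasaki metric) on vector fields -/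
  nabla : W → W → W
  /-- Levi-Civita covariant derivative on forms -/
  D : W → Ω →ₗ[ℝ] Ω
  /-- evaluation of a 3-form on a triple of tangent vectors -/
  ev3 : Ω → W → W → W → ℝ
  /-- coframe 1-forms anticommute -/
  hee : ∀ i j, e i * e j = -(e j * e i)
  /-- the product of the coframe is the volume form of `SM` -/
  hvol : e 0 * e 1 * e 2 * e 3 * e 4 * e 5 * e 6 = VolSM
  /-- the structure equation `dμ = e⁴¹ + e⁵² + e⁶³` -/
  hdmu : d (e 0) = e 4 * e 1 + e 5 * e 2 + e 6 * e 3
  /-- the metric is symmetric -/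
  hgsymm : ∀ a b, g a b = g b a
  /-- `θᵗ` is the adjoint of `θ` -/
  hgtheta : ∀ a b, g (theta a) b = g a (thetat b)
  /-- first Bianchi-type skew symmetry of the curvature of `M` -/
  hRskew : ∀ i j a b, R4 i j a b = - R4 j i a b
  /-- pair symmetry of the curvature of `M` -/
  hRpair : ∀ i j a b, R4 i j a b = R4 a b i j

namespace GwistorSpace

variable {Ω W : Type} [Ring Ω] [Algebra ℝ Ω] [AddCommGroup W] [Module ℝ W]
variable (G : GwistorSpace Ω W)

/-- inclusion of the frame indices of `M` into those of `SM` -/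
def em (i : Fin 4) : Ω := G.e (Fin.castLE (by norm_num) i)

/-- the canonical 1-form `μ = e⁰`, `μ(X) = ⟨U, θX⟩` -/
def μ : Ω := G.e 0

/-- the vertical volume form `α = e⁴⁵⁶` -/
def α : Ω := G.e 4 * G.e 5 * G.e 6

/-- `α₁ = e¹⁵⁶ + e²⁶⁴ + e³⁴⁵` -/
def α₁ : Ω := G.e 1 * G.e 5 * G.e 6 + G.e 2 * G.e 6 * G.e 4 + G.e 3 * G.e 4 * G.e 5

/-- `α₂ = e¹²⁶ + e²³⁴ + e³¹⁵` -/
def α₂ : Ω := G.e 1 * G.e 2 * G.e 6 + G.e 2 * G.e 3 * G.e 4 + G.e 3 * G.e 1 * G.e 5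

/-- `α₃ = e¹²³` -/
def α₃ : Ω := G.e 1 * G.e 2 * G.e 3

/-- `vol = e⁰¹²³ = π* vol_M` -/
def vol : Ω := G.e 0 * G.e 1 * G.e 2 * G.e 3

/-- the 2-form `dμ` -/
def dμ : Ω := G.d (G.e 0)

/-- the fundamental 3-form of the gwistor `G₂` structure:  `φ = α − μ∧dμ − α₂` -/
def φ : Ω := G.α - G.μ * G.dμ - G.α₂

/-- the 4-form `𝓡α = Σ_{i<j} R_{ij01}e^{ij56} + R_{ij02}e^{ij64} + R_{ij03}e^{ij45}` -/
def Rα : Ω := ∑ i : Fin 4, ∑ j : Fin 4,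
  if (i : ℕ) < (j : ℕ) then
    G.R4 i j 0 1 • (G.em i * G.em j * G.e 5 * G.e 6)
    + G.R4 i j 0 2 • (G.em i * G.em j * G.e 6 * G.e 4)
    + G.R4 i j 0 3 • (G.em i * G.em j * G.e 4 * G.e 5)
  else 0

/-- the function `r̄ = r(U,U) = Σ_{j=1}^3 R_{j00j}` -/
def rUU : ℝ := ∑ j ∈ ({1, 2, 3} : Finset (Fin 4)), G.R4 j 0 0 j

/-- the Ricci components of `M` in the adapted frame -/
def RicM (a b : Fin 4) : ℝ := ∑ i : Fin 4, G.R4 i a b i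

/-- the vertical 1-form `ρ = (Ric U)♭ = Σ_{i,k=1}^3 R_{ki0k} e^{i+3}` -/
def ρform : Ω := ∑ i ∈ ({1, 2, 3} : Finset (Fin 4)),
  (∑ k ∈ ({1, 2, 3} : Finset (Fin 4)), G.R4 k i 0 k) •
    G.e (Fin.mk ((i : ℕ) + 3) (by have := i.isLt; omega))

/-- `μ` as a function on tangent vectors, `μ(X) = ⟨U, θX⟩` -/
def μv (X : W) : ℝ := G.g G.U (G.theta X)

/-- the characteristic torsion of the (cocalibrated) gwistor `G₂` structure,
`T^c = *dφ − (1/6)⟨dφ, *φ⟩φ` -/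
def Tc : Ω := G.star (G.d G.φ) - ((1 / 6) * G.ip (G.d G.φ) (G.star G.φ)) • G.φ

/-- `M` has constant sectional curvature `k`:
`R_{ijab} = k (δ_{ib}δ_{ja} − δ_{ia}δ_{jb})` -/
def ConstCurv (k : ℝ) : Prop := ∀ i j a b : Fin 4,
  G.R4 i j a b = k * ((if i = b then (1 : ℝ) else 0) * (if j = a then (1 : ℝ) else 0)
    - (if i = a then (1 : ℝ) else 0) * (if j = b then (1 : ℝ) else 0))

/-- `(M,g)` is Einstein with Einstein constant `lam`:  `r = lam · g` -/
def EinsteinM (lam : ℝ) : Prop := ∀ a b : Fin 4,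
  G.RicM a b = lam * (if a = b then (1 : ℝ) else 0)

end GwistorSpace

namespace GwistorSpace.ConstCurv

variable {Ω W : Type} [Ring Ω] [Algebra ℝ Ω] [AddCommGroup W] [Module ℝ W]
  {G : GwistorSpace Ω W} {k : ℝ}

theorem R4_sectional (hK : G.ConstCurv k) {j : Fin 4} (hj : j ≠ 0) : G.R4 j 0 0 j = k := by
  simp [hK j 0 0 j, hj]

theorem R4_eq_zero (hK : G.ConstCurv k) {i j : Fin 4} (hi : i ≠ 0) (hj : j ≠ 0) (a : Fin 4) :
    G.R4 i j 0 a = 0 := by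
  simp [hK i j 0 a, hi, hj]

theorem R4_zero_left (hK : G.ConstCurv k) {j : Fin 4} (hj : j ≠ 0) (a : Fin 4) :
    G.R4 0 j 0 a = if j = a then -k else 0 := by
  by_cases hja : j = a
  · subst hja
    simp [hK 0 j 0 j, hj]
  · simp [hK 0 j 0 a, hj, hja]

theorem rUU_eq (hK : G.ConstCurv k) : G.rUU = 3 * k := by
  rw [rUU, Finset.sum_congr rfl fun j hj => hK.R4_sectional (by fin_cases j <;> simp_all)]
  simp

theorem Rα_eq (hK : G.ConstCurv k) : G.Rα = (-k) • (G.μ * G.α₁) := by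
  simp only [Rα, Fin.sum_univ_four]
  simp [hK.R4_eq_zero, hK.R4_zero_left, em, μ, α₁, mul_add, ← mul_assoc, smul_add]

end GwistorSpace.ConstCurv

open GwistorSpace in
/-- Let `(M,g)` be an oriented Riemannian 4-manifold of
constant sectional curvature `k`, i.e. `R_{ijkl} = k(δ_{il}δ_{jk} − δ_{ik}δ_{jl})`.
Then on the gwistor space `SM` one has `𝓡α = −k·μ∧α₁`, and consequently
`dφ = 3k·vol − (dμ)² − (k+2)·μ∧α₁`. -/
theorem gwistor_Ralpha_and_dphi_of_constant_curvature
    {Ω W : Type} [Ring Ω] [Algebra ℝ Ω] [AddCommGroup W] [Module ℝ W]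
    (G : GwistorSpace Ω W) (k : ℝ)
    (hdφ : G.d G.φ = G.Rα + G.rUU • G.vol - G.dμ * G.dμ - (2 : ℝ) • (G.μ * G.α₁))
    -- `M` has constant sectional curvature `k`
    (hK : G.ConstCurv k) :
    G.Rα = (-k) • (G.μ * G.α₁) ∧
    G.d G.φ = (3 * k) • G.vol - G.dμ * G.dμ - (k + 2) • (G.μ * G.α₁) := by
  refine ⟨hK.Rα_eq, ?_⟩
  rw [hdφ, hK.Rα_eq, hK.rUU_eq]
  module

end
end

section
/- Let (M,g) be an oriented Riemannian m-manifold of constant sectional curvature k. The metric contact manifold (SM, g̃ = ¼g, η = ½μ, ξ = 2θᵗU, φ = θ − U⊗μ − θᵗ) is η-Einstein (i.e. Ric_{g̃} = λ·g̃ + ν·η⊗η with λ, ν constants) if and only if k = 1 or k = m − 2. -/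
/-!
Evaluate both sides of `Ric = λ g̃ + ν η ⊗ η` on a horizontal and on a vertical unit vector
killed by `μ`: each gives `λ / 4`, so the horizontal coefficient `(m - 1) k - k² / 2` of the Ricci
tensor must equal its vertical coefficient `m - 2 + k² / 2`, i.e. `(k - 1) (k - (m - 2)) = 0`.
Conversely, once the two coefficients agree, `g = ⟨·ʰ, ·ʰ⟩ + ⟨·ᵛ, ·ᵛ⟩` merges them into a multiple
of `g`, and the `μ ⊗ μ` term is already a multiple of `η ⊗ η`.
-/

section SplitForm

variable {W : Type*} [AddCommGroup W] [Module ℝ W] {g : W → W → ℝ} {hor ver : W →ₗ[ℝ] W}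
  {μ : W → ℝ} {Ric : W → W → ℝ} {a b c : ℝ}

theorem apply_zero_zero_of_split (hsplit : ∀ X Y, g X Y = g (hor X) (hor Y) + g (ver X) (ver Y)) :
    g 0 0 = 0 := by
  have h := hsplit 0 0
  rw [map_zero, map_zero] at h
  linarith

theorem apply_self_of_horizontal_unit
    (hsplit : ∀ X Y, g X Y = g (hor X) (hor Y) + g (ver X) (ver Y))
    (hRic : ∀ X Y, Ric X Y = a * g (hor X) (hor Y) + b * g (ver X) (ver Y) + c * μ X * μ Y)
    {X : W} (hX : hor X = X ∧ ver X = 0 ∧ μ X = 0 ∧ g X X = 1) :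
    Ric X X = a := by
  obtain ⟨hh, hv, hμ, hg⟩ := hX
  rw [hRic, hh, hv, hμ, hg, apply_zero_zero_of_split hsplit]
  ring

theorem apply_self_of_vertical_unit
    (hsplit : ∀ X Y, g X Y = g (hor X) (hor Y) + g (ver X) (ver Y))
    (hRic : ∀ X Y, Ric X Y = a * g (hor X) (hor Y) + b * g (ver X) (ver Y) + c * μ X * μ Y)
    {X : W} (hX : hor X = 0 ∧ ver X = X ∧ μ X = 0 ∧ g X X = 1) :
    Ric X X = b := by
  obtain ⟨hh, hv, hμ, hg⟩ := hX
  rw [hRic, hh, hv, hμ, hg, apply_zero_zero_of_split hsplit]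
  ring

theorem coeff_eq_of_eq_smul_add_mul
    (hsplit : ∀ X Y, g X Y = g (hor X) (hor Y) + g (ver X) (ver Y))
    (hRic : ∀ X Y, Ric X Y = a * g (hor X) (hor Y) + b * g (ver X) (ver Y) + c * μ X * μ Y)
    {lam nu : ℝ}
    (hEin : ∀ X Y, Ric X Y = lam * g X Y + nu * μ X * μ Y)
    {X₀ X₁ : W} (hX₀ : hor X₀ = X₀ ∧ ver X₀ = 0 ∧ μ X₀ = 0 ∧ g X₀ X₀ = 1)
    (hX₁ : hor X₁ = 0 ∧ ver X₁ = X₁ ∧ μ X₁ = 0 ∧ g X₁ X₁ = 1) :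
    a = b := by
  have ha : a = lam := by
    rw [← apply_self_of_horizontal_unit hsplit hRic hX₀, hEin, hX₀.2.2.1, hX₀.2.2.2]
    ring
  have hb : b = lam := by
    rw [← apply_self_of_vertical_unit hsplit hRic hX₁, hEin, hX₁.2.2.1, hX₁.2.2.2]
    ring
  rw [ha, hb]

theorem eq_smul_add_mul_of_coeff_eq
    (hsplit : ∀ X Y, g X Y = g (hor X) (hor Y) + g (ver X) (ver Y))
    (hRic : ∀ X Y, Ric X Y = a * g (hor X) (hor Y) + b * g (ver X) (ver Y) + c * μ X * μ Y)
    (hab : a = b) (X Y : W) :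
    Ric X Y = a * g X Y + c * μ X * μ Y := by
  rw [hRic, hsplit X Y, hab]
  ring

end SplitForm

theorem ricci_coeff_eq_iff (m k : ℝ) :
    (m - 1) * k - k ^ 2 / 2 = m - 2 + k ^ 2 / 2 ↔ k = 1 ∨ k = m - 2 := by
  have hfactor : (m - 1) * k - k ^ 2 / 2 - (m - 2 + k ^ 2 / 2) = -((k - 1) * (k - (m - 2))) := by
    ring
  rw [← sub_eq_zero, hfactor, neg_eq_zero, mul_eq_zero, sub_eq_zero, sub_eq_zero]

theorem unit_tangent_bundle_eta_einstein_iff_general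
    {W : Type} [AddCommGroup W] [Module ℝ W]
    (m : ℕ) (k : ℝ)
    (g : W → W → ℝ) (hor ver theta : W →ₗ[ℝ] W) (U : W)
    (Ric : W → W → ℝ)
    (hsplit : ∀ X Y, g X Y = g (hor X) (hor Y) + g (ver X) (ver Y))
    -- the Ricci tensor of `(SM, g̃ = ¼g)` for constant sectional curvature `k`
    (hRic : ∀ X Y, Ric X Y = (((m : ℝ) - 1) * k - k^2/2) * g (hor X) (hor Y)
        + ((m : ℝ) - 2 + k^2/2) * g (ver X) (ver Y)
        + k^2/2 * (2 - (m : ℝ)) * (g U (theta X)) * (g U (theta Y)))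
    -- a horizontal unit vector orthogonal to the Reeb direction
    (X₀ : W) (hX₀ : hor X₀ = X₀ ∧ ver X₀ = 0 ∧ g U (theta X₀) = 0 ∧ g X₀ X₀ = 1)
    -- a vertical unit vector
    (X₁ : W) (hX₁ : hor X₁ = 0 ∧ ver X₁ = X₁ ∧ g U (theta X₁) = 0 ∧ g X₁ X₁ = 1) :
    -- `η`-Einstein  ↔  `k = 1 ∨ k = m − 2`
    (∃ lam nu : ℝ, ∀ X Y, Ric X Y
        = lam * ((1/4 : ℝ) * g X Y)
          + nu * ((1/2 : ℝ) * g U (theta X)) * ((1/2 : ℝ) * g U (theta Y)))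
    ↔ (k = 1 ∨ k = (m : ℝ) - 2) := by
  rw [← ricci_coeff_eq_iff]
  constructor
  · rintro ⟨lam, nu, hEin⟩
    refine coeff_eq_of_eq_smul_add_mul (μ := fun X => g U (theta X)) (lam := lam / 4)
      (nu := nu / 4) hsplit hRic (fun X Y => ?_) hX₀ hX₁
    rw [hEin]
    ring
  · intro hab
    refine ⟨4 * (((m : ℝ) - 1) * k - k ^ 2 / 2), 4 * (k ^ 2 / 2 * (2 - (m : ℝ))), fun X Y => ?_⟩
    rw [eq_smul_add_mul_of_coeff_eq (μ := fun X => g U (theta X)) hsplit hRic hab]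
    ring

theorem unit_tangent_bundle_eta_einstein_iff
    {W : Type} [AddCommGroup W] [Module ℝ W]
    (m : ℕ) (hm : 3 ≤ m) (k : ℝ)
    (g : W → W → ℝ) (hor ver theta thetat : W →ₗ[ℝ] W) (U : W)
    (Ric : W → W → ℝ)
    (hsplit : ∀ X Y, g X Y = g (hor X) (hor Y) + g (ver X) (ver Y))
    -- the Ricci tensor of `(SM, g̃ = ¼g)` for constant sectional curvature `k`
    (hRic : ∀ X Y, Ric X Y = (((m : ℝ) - 1) * k - k^2/2) * g (hor X) (hor Y)
        + ((m : ℝ) - 2 + k^2/2) * g (ver X) (ver Y)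
        + k^2/2 * (2 - (m : ℝ)) * (g U (theta X)) * (g U (theta Y)))
    -- a horizontal unit vector orthogonal to the Reeb direction
    (X₀ : W) (hX₀ : hor X₀ = X₀ ∧ ver X₀ = 0 ∧ g U (theta X₀) = 0 ∧ g X₀ X₀ = 1)
    -- a vertical unit vector
    (X₁ : W) (hX₁ : hor X₁ = 0 ∧ ver X₁ = X₁ ∧ g U (theta X₁) = 0 ∧ g X₁ X₁ = 1)
    -- the geodesic-spray direction `θᵗU` (so that `ξ = 2θᵗU`)
    (hξ : hor (thetat U) = thetat U ∧ ver (thetat U) = 0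
        ∧ g U (theta (thetat U)) = 1 ∧ g (thetat U) (thetat U) = 1) :
    -- `η`-Einstein  ↔  `k = 1 ∨ k = m − 2`
    (∃ lam nu : ℝ, ∀ X Y, Ric X Y
        = lam * ((1/4 : ℝ) * g X Y)
          + nu * ((1/2 : ℝ) * g U (theta X)) * ((1/2 : ℝ) * g U (theta Y)))
    ↔ (k = 1 ∨ k = (m : ℝ) - 2) :=
  unit_tangent_bundle_eta_einstein_iff_general m k g hor ver theta U Ric hsplit hRic X₀ hX₀ X₁ hX₁
end

section
/- For l = n + 2 > 2, the characteristic contact connection ∇^c = ∇^g + ½·μ∧dμ of the Sasakian Stiefel manifold V_{l,2} = SO(l)/SO(n) coincides with the invariant canonical connection of the reductive homogeneous space SO(l)/SO(n); moreover ∇^c is complete and its holonomy group is SO(n). -/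
noncomputable section

open Matrix

/-!
The Stiefel manifold `V_{l,2} = SO(l)/SO(n)`, `l = n + 2`, is the unit tangent
sphere bundle of the round sphere `S^{l−1}` of curvature `1`, with the Sasaki
metric.  Write `𝔰𝔬(l) = 𝔥 ⊕ 𝔪` with `𝔥 = 𝔰𝔬(n)` embedded in the top-left
block and `𝔪` its reductive complement of matrices vanishing on the `𝔥`
block.  With `E_{ij} = D_{ij} − D_{ji}`, the vectors `e₀ = E_{m,l}`,
`e_i = E_{i,l}`, `e_{i+n} = E_{i,m}` (`1 ≤ i ≤ n`, `m = l − 1`) form a basis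
of `𝔪`, orthonormal for the invariant metric `⟨A,B⟩ = ½tr(AᵀB)`, which
corresponds to the Sasaki metric; `μ = e⁰` is the canonical contact-type
1-form of the tangent sphere bundle and `dμ = Σ_{i=1}^n e^{i+n} ∧ e^i`.
-/

/-- the reductive complement `𝔪` of `𝔰𝔬(n)` in `𝔰𝔬(l)`, `l = n+2`:
skew-symmetric matrices vanishing on the top-left `n×n` block -/
def stiefelM (n : ℕ) : Set (Matrix (Fin (n+2)) (Fin (n+2)) ℝ) :=
  {A | Aᵀ = -A ∧ ∀ i j : Fin (n+2), (i : ℕ) < n → (j : ℕ) < n → A i j = 0}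

/-- the invariant inner product on `𝔰𝔬(l)` making the canonical basis
`E_{ij}` (`i < j`) orthonormal -/
def stiefelInner (n : ℕ) (A B : Matrix (Fin (n+2)) (Fin (n+2)) ℝ) : ℝ :=
  (1/2) * Matrix.trace (Aᵀ * B)

/-- the canonical 1-form `μ = e⁰` in the invariant frame: the coefficient
along `e₀ = E_{m,l}` -/
def stiefelMu (n : ℕ) (A : Matrix (Fin (n+2)) (Fin (n+2)) ℝ) : ℝ :=
  A ⟨n, by omega⟩ ⟨n + 1, by omega⟩

/-- the 2-form `dμ = Σ_{i=1}^n e^{i+n} ∧ e^i` in the invariant frame -/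
def stiefelDmu (n : ℕ) (A B : Matrix (Fin (n+2)) (Fin (n+2)) ℝ) : ℝ :=
  ∑ i : Fin n,
    (A (Fin.castLE (by omega) i) ⟨n, by omega⟩
        * B (Fin.castLE (by omega) i) ⟨n + 1, by omega⟩
      - B (Fin.castLE (by omega) i) ⟨n, by omega⟩
        * A (Fin.castLE (by omega) i) ⟨n + 1, by omega⟩)

/-- the torsion 3-form `μ ∧ dμ` of the characteristic contact connection,
evaluated on a triple of tangent vectors -/
def stiefelMuDmu (n : ℕ) (A B C : Matrix (Fin (n+2)) (Fin (n+2)) ℝ) : ℝ :=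
  stiefelMu n A * stiefelDmu n B C - stiefelMu n B * stiefelDmu n A C
    + stiefelMu n C * stiefelDmu n A B

/-- projection of `𝔰𝔬(l)` onto the reductive complement `𝔪` (kills the
top-left `𝔥 = 𝔰𝔬(n)` block) -/
def stiefelProjM (n : ℕ) (A : Matrix (Fin (n+2)) (Fin (n+2)) ℝ) :
    Matrix (Fin (n+2)) (Fin (n+2)) ℝ :=
  Matrix.of fun i j => if (i : ℕ) < n ∧ (j : ℕ) < n then 0 else A i j

/-- the elements of `𝔪`, as a type -/
abbrev StiefelMsub (n : ℕ) := {A : Matrix (Fin (n+2)) (Fin (n+2)) ℝ // A ∈ stiefelM n}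

/-- the block-diagonal embedding `SO(n) ⊂ SO(l)`, `h ↦ diag(h, 1)` -/
def stiefelEmbedSO (n : ℕ) (h : Matrix (Fin n) (Fin n) ℝ) :
    Matrix (Fin (n+2)) (Fin (n+2)) ℝ :=
  Matrix.reindex finSumFinEquiv finSumFinEquiv
    (Matrix.fromBlocks h 0 0 (1 : Matrix (Fin 2) (Fin 2) ℝ))

/-- the group `SO(n)`, acting on `𝔰𝔬(l)` (hence on `𝔪`) by conjugation through
the embedding `SO(n) ⊂ SO(l)`: the holonomy group of the canonical connection
of the reductive homogeneous space `SO(l)/SO(n)` -/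
def stiefelSOnAction (n : ℕ) :
    Set (Matrix (Fin (n+2)) (Fin (n+2)) ℝ → Matrix (Fin (n+2)) (Fin (n+2)) ℝ) :=
  {f | ∃ h : Matrix (Fin n) (Fin n) ℝ,
      h ∈ Matrix.orthogonalGroup (Fin n) ℝ ∧ h.det = 1 ∧
      f = fun A => stiefelEmbedSO n h * A * (stiefelEmbedSO n h)ᵀ}

/-!
The metric `⟨A, B⟩ = ½ tr (Aᵀ B)` is `ad`-invariant, so the invariant Koszul formula collapses
to `⟨∇^g_X Y, Z⟩ = ½ ⟨[X, Y], Z⟩ = -½ tr (X Y Z)` on `𝔪`. Splitting indices into the `𝔥`-block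
and the last two coordinates shows `tr (X Y Z) = (μ ∧ dμ)(X, Y, Z)` for `X, Y, Z ∈ 𝔪`, hence the
Nomizu map of `∇^g + ½ μ ∧ dμ` vanishes: it is the canonical connection, and completeness and
holonomy are inherited from it.
-/

theorem Matrix.trace_transpose_commutator_mul {ι R : Type*} [Fintype ι] [CommRing R]
    {A B C : Matrix ι ι R} (hA : Aᵀ = -A) (hB : Bᵀ = -B) (hC : Cᵀ = -C) :
    trace ((A * B - B * A)ᵀ * C) = -2 * trace (A * B * C) := by
  have hBAC : trace (B * A * C) = -trace (A * B * C) := by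
    rw [← trace_transpose, transpose_mul, transpose_mul, hA, hB, hC]
    simp only [neg_mul, mul_neg, neg_neg, trace_neg]
    rw [trace_mul_cycle, Matrix.mul_assoc]
  simp only [transpose_sub, transpose_mul, hA, hB, neg_mul_neg, sub_mul, trace_sub, hBAC]
  ring

namespace Stiefel

variable {n : ℕ}

lemma apply_swap_of_mem {A : Matrix (Fin (n+2)) (Fin (n+2)) ℝ} (hA : A ∈ stiefelM n)
    (i j : Fin (n+2)) : A j i = -A i j := by
  simpa using congrFun (congrFun hA.1 i) j

lemma apply_self_of_mem {A : Matrix (Fin (n+2)) (Fin (n+2)) ℝ} (hA : A ∈ stiefelM n)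
    (i : Fin (n+2)) : A i i = 0 := by
  linarith [apply_swap_of_mem hA i i]

lemma add_smul_mem {A B : Matrix (Fin (n+2)) (Fin (n+2)) ℝ}
    (hA : A ∈ stiefelM n) (hB : B ∈ stiefelM n) (c : ℝ) : A + c • B ∈ stiefelM n := by
  refine ⟨?_, fun i j hi hj => ?_⟩
  · rw [transpose_add, transpose_smul, hA.1, hB.1, smul_neg, neg_add]
  · simp [hA.2 i j hi hj, hB.2 i j hi hj]

lemma inner_add_smul (A B C : Matrix (Fin (n+2)) (Fin (n+2)) ℝ) (c : ℝ) :
    stiefelInner n (A + c • B) C = stiefelInner n A C + c * stiefelInner n B C := by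
  simp only [stiefelInner, transpose_add, transpose_smul, add_mul, smul_mul, trace_add,
    trace_smul, smul_eq_mul]
  ring

lemma inner_projM (A : Matrix (Fin (n+2)) (Fin (n+2)) ℝ)
    {Z : Matrix (Fin (n+2)) (Fin (n+2)) ℝ} (hZ : Z ∈ stiefelM n) :
    stiefelInner n (stiefelProjM n A) Z = stiefelInner n A Z := by
  simp only [stiefelInner, trace, diag_apply, mul_apply, transpose_apply, stiefelProjM, of_apply]
  congr 1
  refine Finset.sum_congr rfl fun i _ => Finset.sum_congr rfl fun j _ => ?_
  by_cases h : (j : ℕ) < n ∧ (i : ℕ) < n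
  · simp [h, hZ.2 j i h.1 h.2]
  · simp [h]

lemma inner_commutator {X Y Z : Matrix (Fin (n+2)) (Fin (n+2)) ℝ}
    (hX : X ∈ stiefelM n) (hY : Y ∈ stiefelM n) (hZ : Z ∈ stiefelM n) :
    stiefelInner n (X * Y - Y * X) Z = -trace (X * Y * Z) := by
  rw [stiefelInner, trace_transpose_commutator_mul hX.1 hY.1 hZ.1]
  ring

lemma sum_fin_add_two (f : Fin (n+2) → ℝ) :
    ∑ i, f i
      = ∑ i : Fin n, f (Fin.castLE (by omega) i) + f ⟨n, by omega⟩ + f ⟨n+1, by omega⟩ := by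
  rw [Fin.sum_univ_castSucc, Fin.sum_univ_castSucc]
  rfl

theorem trace_mul_mul_eq_muDmu {X Y Z : Matrix (Fin (n+2)) (Fin (n+2)) ℝ}
    (hX : X ∈ stiefelM n) (hY : Y ∈ stiefelM n) (hZ : Z ∈ stiefelM n) :
    trace (X * Y * Z) = stiefelMuDmu n X Y Z := by
  have block {A : Matrix (Fin (n+2)) (Fin (n+2)) ℝ} (hA : A ∈ stiefelM n) (i j : Fin n) :
      A (Fin.castLE (by omega) i) (Fin.castLE (by omega) j) = 0 :=
    hA.2 _ _ (by simp) (by simp)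
  have expand : trace (X * Y * Z) = ∑ i, ∑ k, ∑ j, X i j * Y j k * Z k i := by
    simp [trace, mul_apply, Finset.sum_mul]
  -- only the terms with exactly one index in the `𝔥`-block survive
  simp only [expand, sum_fin_add_two, block hX, block hY, block hZ, apply_self_of_mem hX,
    apply_self_of_mem hY, apply_self_of_mem hZ, zero_mul, mul_zero, Finset.sum_const_zero,
    add_zero, zero_add]
  simp only [stiefelMuDmu, stiefelMu, stiefelDmu,
    apply_swap_of_mem hX (Fin.castLE (Nat.le_add_right n 2) _) ⟨n, by omega⟩,
    apply_swap_of_mem hX (Fin.castLE (Nat.le_add_right n 2) _) ⟨n+1, by omega⟩,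
    apply_swap_of_mem hX ⟨n, by omega⟩ ⟨n+1, by omega⟩,
    apply_swap_of_mem hY (Fin.castLE (Nat.le_add_right n 2) _) ⟨n, by omega⟩,
    apply_swap_of_mem hY (Fin.castLE (Nat.le_add_right n 2) _) ⟨n+1, by omega⟩,
    apply_swap_of_mem hY ⟨n, by omega⟩ ⟨n+1, by omega⟩,
    apply_swap_of_mem hZ (Fin.castLE (Nat.le_add_right n 2) _) ⟨n, by omega⟩,
    apply_swap_of_mem hZ (Fin.castLE (Nat.le_add_right n 2) _) ⟨n+1, by omega⟩,
    apply_swap_of_mem hZ ⟨n, by omega⟩ ⟨n+1, by omega⟩,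
    Finset.mul_sum, ← Finset.sum_sub_distrib, ← Finset.sum_add_distrib]
  exact Finset.sum_congr rfl fun i _ => by ring

theorem koszul_eq_neg_muDmu {X Y Z : Matrix (Fin (n+2)) (Fin (n+2)) ℝ}
    (hX : X ∈ stiefelM n) (hY : Y ∈ stiefelM n) (hZ : Z ∈ stiefelM n) :
    stiefelInner n (stiefelProjM n (X * Y - Y * X)) Z
        - stiefelInner n (stiefelProjM n (Y * Z - Z * Y)) X
        + stiefelInner n (stiefelProjM n (Z * X - X * Z)) Y
      = -stiefelMuDmu n X Y Z := by
  rw [inner_projM _ hZ, inner_projM _ hX, inner_projM _ hY, inner_commutator hX hY hZ,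
    inner_commutator hY hZ hX, inner_commutator hZ hX hY, trace_mul_cycle Y, ← trace_mul_cycle X,
    ← trace_mul_mul_eq_muDmu hX hY hZ]
  ring

end Stiefel

theorem stiefel_characteristic_contact_connection_is_canonical_general
    (n : ℕ)
    -- the invariant Levi-Civita connection (Nomizu map) of the Sasaki metric,
    -- characterized by the invariant Koszul formula
    (LC : StiefelMsub n → StiefelMsub n → Matrix (Fin (n+2)) (Fin (n+2)) ℝ)
    (hLCmem : ∀ X Y, LC X Y ∈ stiefelM n)
    (hLC : ∀ X Y Z : StiefelMsub n,
      2 * stiefelInner n (LC X Y) Z.1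
        = stiefelInner n (stiefelProjM n (X.1 * Y.1 - Y.1 * X.1)) Z.1
          - stiefelInner n (stiefelProjM n (Y.1 * Z.1 - Z.1 * Y.1)) X.1
          + stiefelInner n (stiefelProjM n (Z.1 * X.1 - X.1 * Z.1)) Y.1)
    -- the torsion `(2,1)`-tensor of the characteristic contact connection,
    -- metrically equivalent to the torsion 3-form `μ ∧ dμ`
    (T : StiefelMsub n → StiefelMsub n → Matrix (Fin (n+2)) (Fin (n+2)) ℝ)
    (hTmem : ∀ X Y, T X Y ∈ stiefelM n)
    (hTval : ∀ X Y Z : StiefelMsub n,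
      stiefelInner n (T X Y) Z.1 = stiefelMuDmu n X.1 Y.1 Z.1)
    -- nondegeneracy of the invariant metric on `𝔪`
    (hnd : ∀ A ∈ stiefelM n, (∀ Z ∈ stiefelM n, stiefelInner n A Z = 0) → A = 0)
    -- abstract completeness predicate and holonomy-group assignment for
    -- invariant connections on `SO(l)/SO(n)` (given through their Nomizu maps),
    -- together with the classical facts (Kobayashi–Nomizu) that the canonical
    -- connection (Nomizu map `0`) is complete with holonomy group `SO(n)`
    (IsComplete : (StiefelMsub n → StiefelMsub n → Matrix (Fin (n+2)) (Fin (n+2)) ℝ) → Prop)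
    (Holonomy : (StiefelMsub n → StiefelMsub n → Matrix (Fin (n+2)) (Fin (n+2)) ℝ) →
        Set (Matrix (Fin (n+2)) (Fin (n+2)) ℝ → Matrix (Fin (n+2)) (Fin (n+2)) ℝ))
    (hcanComplete : IsComplete (fun _ _ => 0))
    (hcanHol : Holonomy (fun _ _ => 0) = stiefelSOnAction n) :
    -- `∇^c = ∇^g + ½(μ∧dμ)` is the canonical connection (Nomizu map `0`),
    -- it is complete, and its holonomy group is `SO(n)`
    (fun X Y => LC X Y + (1/2 : ℝ) • T X Y)
        = (fun _ _ => (0 : Matrix (Fin (n+2)) (Fin (n+2)) ℝ)) ∧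
    IsComplete (fun X Y => LC X Y + (1/2 : ℝ) • T X Y) ∧
    Holonomy (fun X Y => LC X Y + (1/2 : ℝ) • T X Y) = stiefelSOnAction n := by
  have canonical : (fun X Y => LC X Y + (1/2 : ℝ) • T X Y)
      = (fun _ _ => (0 : Matrix (Fin (n+2)) (Fin (n+2)) ℝ)) := by
    funext X Y
    refine hnd _ (Stiefel.add_smul_mem (hLCmem X Y) (hTmem X Y) _) fun Z hZ => ?_
    have hLCZ := hLC X Y ⟨Z, hZ⟩
    have hTZ := hTval X Y ⟨Z, hZ⟩
    rw [Stiefel.koszul_eq_neg_muDmu X.2 Y.2 hZ] at hLCZ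
    rw [Stiefel.inner_add_smul]
    linarith
  exact ⟨canonical, canonical ▸ hcanComplete, canonical ▸ hcanHol⟩

/-- For `l = n + 2 > 2`, the characteristic contact
connection `∇^c = ∇^g + ½·μ∧dμ` of the Sasakian Stiefel manifold
`V_{l,2} = SO(l)/SO(n)` coincides with the invariant canonical connection of
the reductive homogeneous space `SO(l)/SO(n)`; moreover `∇^c` is complete and
its holonomy group is `SO(n)`. -/
theorem stiefel_characteristic_contact_connection_is_canonical
    (n : ℕ) (hn : 0 < n)   -- so that `l = n + 2 > 2`
    -- the invariant Levi-Civita connection (Nomizu map) of the Sasaki metric,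
    -- characterized by the invariant Koszul formula
    (LC : StiefelMsub n → StiefelMsub n → Matrix (Fin (n+2)) (Fin (n+2)) ℝ)
    (hLCmem : ∀ X Y, LC X Y ∈ stiefelM n)
    (hLC : ∀ X Y Z : StiefelMsub n,
      2 * stiefelInner n (LC X Y) Z.1
        = stiefelInner n (stiefelProjM n (X.1 * Y.1 - Y.1 * X.1)) Z.1
          - stiefelInner n (stiefelProjM n (Y.1 * Z.1 - Z.1 * Y.1)) X.1
          + stiefelInner n (stiefelProjM n (Z.1 * X.1 - X.1 * Z.1)) Y.1)
    -- the torsion `(2,1)`-tensor of the characteristic contact connection,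
    -- metrically equivalent to the torsion 3-form `μ ∧ dμ`
    (T : StiefelMsub n → StiefelMsub n → Matrix (Fin (n+2)) (Fin (n+2)) ℝ)
    (hTmem : ∀ X Y, T X Y ∈ stiefelM n)
    (hTval : ∀ X Y Z : StiefelMsub n,
      stiefelInner n (T X Y) Z.1 = stiefelMuDmu n X.1 Y.1 Z.1)
    -- nondegeneracy of the invariant metric on `𝔪`
    (hnd : ∀ A ∈ stiefelM n, (∀ Z ∈ stiefelM n, stiefelInner n A Z = 0) → A = 0)
    -- abstract completeness predicate and holonomy-group assignment for
    -- invariant connections on `SO(l)/SO(n)` (given through their Nomizu maps),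
    -- together with the classical facts (Kobayashi–Nomizu) that the canonical
    -- connection (Nomizu map `0`) is complete with holonomy group `SO(n)`
    (IsComplete : (StiefelMsub n → StiefelMsub n → Matrix (Fin (n+2)) (Fin (n+2)) ℝ) → Prop)
    (Holonomy : (StiefelMsub n → StiefelMsub n → Matrix (Fin (n+2)) (Fin (n+2)) ℝ) →
        Set (Matrix (Fin (n+2)) (Fin (n+2)) ℝ → Matrix (Fin (n+2)) (Fin (n+2)) ℝ))
    (hcanComplete : IsComplete (fun _ _ => 0))
    (hcanHol : Holonomy (fun _ _ => 0) = stiefelSOnAction n) :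
    -- `∇^c = ∇^g + ½(μ∧dμ)` is the canonical connection (Nomizu map `0`),
    -- it is complete, and its holonomy group is `SO(n)`
    (fun X Y => LC X Y + (1/2 : ℝ) • T X Y)
        = (fun _ _ => (0 : Matrix (Fin (n+2)) (Fin (n+2)) ℝ)) ∧
    IsComplete (fun X Y => LC X Y + (1/2 : ℝ) • T X Y) ∧
    Holonomy (fun X Y => LC X Y + (1/2 : ℝ) • T X Y) = stiefelSOnAction n :=
  stiefel_characteristic_contact_connection_is_canonical_general n LC hLCmem hLC T hTmem hTval hnd
    IsComplete Holonomy hcanComplete hcanHol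

end
end

section
/- On the reductive complement 𝔪 in 𝔰𝔬(l) = 𝔰𝔬(n) ⊕ 𝔪 of the Stiefel manifold V_{l,2} = SO(l)/SO(n), with the invariant metric making the canonical basis of 𝔪 orthonormal, the torsion 3-form of the characteristic contact connection satisfies μ∧dμ(X,Y,Z) = −⟨[X,Y],Z⟩ for all X, Y, Z ∈ 𝔪. -/
noncomputable section

open Matrix

/-! An element `A ∈ 𝔪` is determined by `μ(A) = A_{ml}` and the two columns `u = A_{·m}`,
`v = A_{·l}` over the `𝔥` block. In these coordinates `⟨A, B⟩ = μ(A)μ(B) + u_A·u_B + v_A·v_B`,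
and the `𝔪`-part of `[X, Y]` has coordinates `(−dμ(X, Y), μ(X)v_Y − μ(Y)v_X, μ(Y)u_X − μ(X)u_Y)`,
while its `𝔥`-part is orthogonal to `𝔪`. Substituting gives `−μ∧dμ(X, Y, Z)` term by term. -/

lemma Fin.sum_univ_add_two {M : Type*} [AddCommMonoid M] {n : ℕ} (f : Fin (n+2) → M) :
    ∑ i, f i = ∑ i : Fin n, f (Fin.castLE (by omega) i) + f ⟨n, by omega⟩ + f ⟨n+1, by omega⟩ := by
  rw [Fin.sum_univ_castSucc, Fin.sum_univ_castSucc]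
  rfl

section Skew

variable {ι R : Type*} {A B : Matrix ι ι R}

lemma Matrix.apply_eq_neg_of_transpose_eq_neg [Neg R] (hA : Aᵀ = -A) (i j : ι) :
    A i j = -A j i :=
  congrFun (congrFun hA j) i

lemma Matrix.apply_self_eq_zero_of_transpose_eq_neg [NonAssocRing R] [NoZeroDivisors R] [CharZero R]
    (hA : Aᵀ = -A) (i : ι) : A i i = 0 :=
  CharZero.eq_neg_self_iff.mp (A.apply_eq_neg_of_transpose_eq_neg hA i i)

lemma Matrix.transpose_commutator_eq_neg [CommRing R] [Fintype ι] (hA : Aᵀ = -A) (hB : Bᵀ = -B) :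
    (A * B - B * A)ᵀ = -(A * B - B * A) := by
  simp [transpose_mul, hA, hB]

end Skew

/- The indices `⟨n, _⟩`, `⟨n+1, _⟩` are the paper's `m`, `l`; the indices `Fin.castLE _ i`
span the `𝔥` block. -/
namespace Stiefel

variable {n : ℕ}

lemma apply_castLE_castLE_of_mem {A : Matrix (Fin (n+2)) (Fin (n+2)) ℝ} (hA : A ∈ stiefelM n)
    (i j : Fin n) : A (Fin.castLE (by omega) i) (Fin.castLE (by omega) j) = 0 :=
  hA.2 _ _ i.2 j.2

section SkewEntries

variable {A : Matrix (Fin (n+2)) (Fin (n+2)) ℝ} (hA : Aᵀ = -A)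
include hA

lemma apply_m_castLE (i : Fin n) :
    A ⟨n, by omega⟩ (Fin.castLE (by omega) i) = -A (Fin.castLE (by omega) i) ⟨n, by omega⟩ :=
  apply_eq_neg_of_transpose_eq_neg hA _ _

lemma apply_l_castLE (i : Fin n) :
    A ⟨n+1, by omega⟩ (Fin.castLE (by omega) i) = -A (Fin.castLE (by omega) i) ⟨n+1, by omega⟩ :=
  apply_eq_neg_of_transpose_eq_neg hA _ _

lemma apply_l_m : A ⟨n+1, by omega⟩ ⟨n, by omega⟩ = -stiefelMu n A :=
  apply_eq_neg_of_transpose_eq_neg hA _ _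

end SkewEntries

section Bracket

variable {X Y : Matrix (Fin (n+2)) (Fin (n+2)) ℝ} (hX : X ∈ stiefelM n) (hY : Y ∈ stiefelM n)
include hX hY

lemma commutator_apply_castLE_m (i : Fin n) :
    (X * Y - Y * X) (Fin.castLE (by omega) i) ⟨n, by omega⟩ =
      stiefelMu n X * Y (Fin.castLE (by omega) i) ⟨n+1, by omega⟩
        - stiefelMu n Y * X (Fin.castLE (by omega) i) ⟨n+1, by omega⟩ := by
  simp only [Matrix.sub_apply, mul_apply, Fin.sum_univ_add_two, apply_castLE_castLE_of_mem hX,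
    apply_castLE_castLE_of_mem hY, apply_self_eq_zero_of_transpose_eq_neg hX.1,
    apply_self_eq_zero_of_transpose_eq_neg hY.1, apply_l_m hX.1, apply_l_m hY.1,
    mul_zero, zero_mul, add_zero, Finset.sum_const_zero]
  ring

lemma commutator_apply_castLE_l (i : Fin n) :
    (X * Y - Y * X) (Fin.castLE (by omega) i) ⟨n+1, by omega⟩ =
      stiefelMu n Y * X (Fin.castLE (by omega) i) ⟨n, by omega⟩
        - stiefelMu n X * Y (Fin.castLE (by omega) i) ⟨n, by omega⟩ := by
  simp only [Matrix.sub_apply, mul_apply, Fin.sum_univ_add_two, apply_castLE_castLE_of_mem hX,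
    apply_castLE_castLE_of_mem hY, apply_self_eq_zero_of_transpose_eq_neg hX.1,
    apply_self_eq_zero_of_transpose_eq_neg hY.1, stiefelMu,
    mul_zero, zero_mul, add_zero, Finset.sum_const_zero]
  ring

lemma commutator_apply_m_l :
    (X * Y - Y * X) ⟨n, by omega⟩ ⟨n+1, by omega⟩ = -stiefelDmu n X Y := by
  simp only [Matrix.sub_apply, mul_apply, Fin.sum_univ_add_two, apply_m_castLE hX.1,
    apply_m_castLE hY.1, apply_self_eq_zero_of_transpose_eq_neg hX.1,
    apply_self_eq_zero_of_transpose_eq_neg hY.1, stiefelDmu, mul_zero, zero_mul, add_zero,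
    neg_mul, Finset.sum_sub_distrib, Finset.sum_neg_distrib]
  ring

end Bracket

lemma stiefelInner_eq_of_transpose_eq_neg {A B : Matrix (Fin (n+2)) (Fin (n+2)) ℝ}
    (hA : Aᵀ = -A) (hB : B ∈ stiefelM n) :
    stiefelInner n A B = A ⟨n, by omega⟩ ⟨n+1, by omega⟩ * stiefelMu n B +
      ∑ i : Fin n,
        (A (Fin.castLE (by omega) i) ⟨n, by omega⟩ * B (Fin.castLE (by omega) i) ⟨n, by omega⟩
          + A (Fin.castLE (by omega) i) ⟨n+1, by omega⟩
            * B (Fin.castLE (by omega) i) ⟨n+1, by omega⟩) := by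
  simp only [stiefelInner, trace, diag, mul_apply, transpose_apply, Fin.sum_univ_add_two,
    apply_castLE_castLE_of_mem hB, apply_self_eq_zero_of_transpose_eq_neg hB.1,
    apply_m_castLE hB.1, apply_l_castLE hB.1, apply_l_m hB.1, apply_m_castLE hA,
    apply_l_castLE hA, apply_l_m hA, mul_zero, add_zero, Finset.sum_const_zero,
    Finset.sum_add_distrib, neg_mul_neg, stiefelMu]
  ring

end Stiefel

theorem stiefel_mu_wedge_dmu_eq_neg_bracket_general
    (n : ℕ)
    (X Y Z : Matrix (Fin (n+2)) (Fin (n+2)) ℝ)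
    (hX : X ∈ stiefelM n) (hY : Y ∈ stiefelM n) (hZ : Z ∈ stiefelM n) :
    stiefelMuDmu n X Y Z = - stiefelInner n (X * Y - Y * X) Z := by
  rw [Stiefel.stiefelInner_eq_of_transpose_eq_neg (transpose_commutator_eq_neg hX.1 hY.1) hZ,
    Stiefel.commutator_apply_m_l hX hY]
  simp only [Stiefel.commutator_apply_castLE_m hX hY, Stiefel.commutator_apply_castLE_l hX hY,
    stiefelMuDmu, stiefelDmu, Finset.mul_sum, Finset.sum_mul, ← Finset.sum_neg_distrib,
    ← Finset.sum_sub_distrib, ← Finset.sum_add_distrib]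
  exact Finset.sum_congr rfl fun i _ => by ring

/-- On the reductive complement `𝔪` in
`𝔰𝔬(l) = 𝔰𝔬(n) ⊕ 𝔪` of the Stiefel manifold `V_{l,2} = SO(l)/SO(n)`, with the
invariant metric making the canonical basis of `𝔪` orthonormal, the torsion
3-form of the characteristic contact connection satisfies
`μ∧dμ(X,Y,Z) = −⟨[X,Y],Z⟩` for all `X, Y, Z ∈ 𝔪`. -/
theorem stiefel_mu_wedge_dmu_eq_neg_bracket
    (n : ℕ) (hn : 0 < n)   -- so that `l = n + 2 > 2`
    (X Y Z : Matrix (Fin (n+2)) (Fin (n+2)) ℝ)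
    (hX : X ∈ stiefelM n) (hY : Y ∈ stiefelM n) (hZ : Z ∈ stiefelM n) :
    stiefelMuDmu n X Y Z = - stiefelInner n (X * Y - Y * X) Z :=
  stiefel_mu_wedge_dmu_eq_neg_bracket_general n X Y Z hX hY hZ

end
end
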